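/- arXiv:1501.00040 — 3 statements merged into one kernel-verified Lean document; each statement's English description precedes it below -/
import Mathlib

section
/- There exists ω_∞ > 0 (for instance any ω with 2ω > N²(Max(B_diag) − Min(B_diag)), where B_diag is the set of all intra-layer modularity entries B_{ijs}) such that for all ω > ω_∞, every globally optimal multilayer partition has maximal persistence: Pers(C_max^ω)|_s = N for all s ∈ {1,...,|T|−1}. -/
open Finset

/-- Kronecker delta on community labels, as a real number. -/
noncomputable def kdelta (a b : ℕ) : ℝ := if a = b then 1 else 0

/-- Persistence between layers `s` and `s+1`: the number of nodes whose community
assignment is unchanged from layer `s` to layer `s+1`. -/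
def persAt (N : ℕ) (c : ℕ → Fin N → ℕ) (s : ℕ) : ℕ :=
  (Finset.univ.filter fun i : Fin N => c s i = c (s + 1) i).card

/-- Total persistence of a multilayer partition: `Pers(C) = Σ_{s=1}^{|T|-1} Σ_i δ(c_{i_s}, c_{i_{s+1}})`. -/
def pers (N T : ℕ) (c : ℕ → Fin N → ℕ) : ℕ :=
  ∑ s ∈ Finset.range (T - 1), persAt N c s

/-- Multilayer modularity quality function
`Q(C) = Σ_s Σ_{i,j} B_{ijs} δ(c_{i_s}, c_{j_s}) + 2 ω Pers(C)`. -/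
noncomputable def Q (N T : ℕ) (B : ℕ → Fin N → Fin N → ℝ) (ω : ℝ) (c : ℕ → Fin N → ℕ) : ℝ :=
  (∑ s ∈ Finset.range T, ∑ i : Fin N, ∑ j : Fin N, B s i j * kdelta (c s i) (c s j))
    + 2 * ω * (pers N T c : ℝ)

/-- A multilayer partition (given by its community-assignment function) is globally
optimal for inter-layer coupling `ω` if it maximizes the multilayer quality function. -/
def IsOptimal (N T : ℕ) (B : ℕ → Fin N → Fin N → ℝ) (ω : ℝ) (c : ℕ → Fin N → ℕ) : Prop :=
  ∀ c' : ℕ → Fin N → ℕ, Q N T B ω c' ≤ Q N T B ω c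

/-- Adjacency (nonzero weight) in the multilayer modularity matrix: intra-layer entries
`B_{ijs}` and ordinal diagonal uniform inter-layer coupling `ω` between consecutive layers. -/
def Adj (N T : ℕ) (B : ℕ → Fin N → Fin N → ℝ) (ω : ℝ) (p q : ℕ × Fin N) : Prop :=
  (p.1 = q.1 ∧ p.1 < T ∧ B p.1 p.2 q.2 ≠ 0) ∨
  (p.2 = q.2 ∧ ω ≠ 0 ∧ ((p.1 + 1 = q.1 ∧ q.1 < T) ∨ (q.1 + 1 = p.1 ∧ p.1 < T)))

/-- No community of the multilayer partition contains a component that is disconnected in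
the weighted graph whose adjacency matrix is the multilayer modularity matrix: any two
node-layer pairs in the same community are joined by a path staying inside that community. -/
def NoDisconnectedCommunities (N T : ℕ) (B : ℕ → Fin N → Fin N → ℝ) (ω : ℝ)
    (c : ℕ → Fin N → ℕ) : Prop :=
  ∀ p q : ℕ × Fin N, p.1 < T → q.1 < T → c p.1 p.2 = c q.1 q.2 →
    Relation.ReflTransGen
      (fun a b => Adj N T B ω a b ∧ c a.1 a.2 = c p.1 p.2 ∧ c b.1 b.2 = c p.1 p.2) p q

lemma persAt_le (N : ℕ) (c : ℕ → Fin N → ℕ) (s : ℕ) : persAt N c s ≤ N := by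
  simpa [persAt] using (Finset.card_filter_le (Finset.univ : Finset (Fin N))
    (fun i => c s i = c (s + 1) i))

lemma Qsum_bound (N T : ℕ) (B : ℕ → Fin N → Fin N → ℝ) (c : ℕ → Fin N → ℕ) :
    |∑ s ∈ Finset.range T, ∑ i : Fin N, ∑ j : Fin N, B s i j * kdelta (c s i) (c s j)|
      ≤ ∑ s ∈ Finset.range T, ∑ i : Fin N, ∑ j : Fin N, |B s i j| := by
  refine (Finset.abs_sum_le_sum_abs _ _).trans (Finset.sum_le_sum fun s _ => ?_)
  refine (Finset.abs_sum_le_sum_abs _ _).trans (Finset.sum_le_sum fun i _ => ?_)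
  refine (Finset.abs_sum_le_sum_abs _ _).trans (Finset.sum_le_sum fun j _ => ?_)
  rw [abs_mul]
  have h : |kdelta (c s i) (c s j)| ≤ 1 := by
    unfold kdelta; split <;> simp
  calc |B s i j| * |kdelta (c s i) (c s j)| ≤ |B s i j| * 1 :=
        mul_le_mul_of_nonneg_left h (abs_nonneg _)
    _ = |B s i j| := mul_one _

/-- **Proposition 5.** There exists `ω_∞ > 0` such that for all `ω > ω_∞`, every globally
optimal multilayer partition has maximal persistence: `Pers(C)|_s = N` for all layers
`s ∈ {1,…,|T|−1}`. -/
theorem large_coupling_full_persistence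
    (N T : ℕ)
    (B : ℕ → Fin N → Fin N → ℝ) :
    ∃ ωinf : ℝ, 0 < ωinf ∧ ∀ ω : ℝ, ωinf < ω →
      ∀ c : ℕ → Fin N → ℕ, IsOptimal N T B ω c →
        ∀ s : ℕ, s < T - 1 → persAt N c s = N := by
  classical
  set M : ℝ := ∑ s ∈ Finset.range T, ∑ i : Fin N, ∑ j : Fin N, |B s i j| with hM
  have hM0 : 0 ≤ M := by
    refine Finset.sum_nonneg fun s _ => Finset.sum_nonneg fun i _ =>
      Finset.sum_nonneg fun j _ => abs_nonneg _
  refine ⟨M + 1, by linarith, fun ω hω c hopt s hs => ?_⟩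
  by_contra hne
  have hlt : persAt N c s < N := lt_of_le_of_ne (persAt_le N c s) hne
  have hpers : pers N T c < (T - 1) * N := by
    calc pers N T c < ∑ _x ∈ Finset.range (T - 1), N := by
          refine Finset.sum_lt_sum (fun t _ => persAt_le N c t) ?_
          exact ⟨s, Finset.mem_range.mpr hs, hlt⟩
      _ = (T - 1) * N := by simp [Finset.sum_const, Finset.card_range]
  have hpersR : (pers N T c : ℝ) ≤ ((T - 1) * N : ℕ) - 1 := by
    have h : pers N T c + 1 ≤ (T - 1) * N := hpers
    have h2 : ((pers N T c + 1 : ℕ) : ℝ) ≤ (((T - 1) * N : ℕ) : ℝ) := Nat.cast_le.mpr h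
    push_cast at h2 ⊢
    linarith
  -- the constant partition
  set c0 : ℕ → Fin N → ℕ := fun _ _ => 0 with hc0
  have hpers0 : pers N T c0 = (T - 1) * N := by
    simp [pers, persAt, c0, Finset.sum_const, Finset.card_range]
  have hQ0 : Q N T B ω c0 ≥ -M + 2 * ω * ((T - 1) * N : ℕ) := by
    have h1 := Qsum_bound N T B c0
    have h2 := neg_abs_le (∑ s ∈ Finset.range T, ∑ i : Fin N, ∑ j : Fin N,
      B s i j * kdelta (c0 s i) (c0 s j))
    simp only [Q, hpers0]
    linarith
  have hQc : Q N T B ω c ≤ M + 2 * ω * (pers N T c : ℝ) := by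
    have h1 := Qsum_bound N T B c
    have h2 := le_abs_self (∑ s ∈ Finset.range T, ∑ i : Fin N, ∑ j : Fin N,
      B s i j * kdelta (c s i) (c s j))
    simp only [Q]
    linarith
  have hle := hopt c0
  have hω0 : 0 < ω := by linarith
  have : 2 * ω * (pers N T c : ℝ) ≤ 2 * ω * (((T - 1) * N : ℕ) - 1) := by
    exact mul_le_mul_of_nonneg_left hpersR (by linarith)
  linarith
end

section
/- If the set of globally optimal multilayer partitions at couplings ω_1 and ω_2 coincide, where ω_1 > ω_2 > 0, then for every intermediate coupling ω ∈ (ω_2, ω_1) the set of globally optimal partitions equals this same set. -/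
open Finset

/-!
For a fixed partition `C`, `Q(C; ω) = Q(C; 0) + 2ω Pers(C)` is affine in `ω`. A partition `D`
optimal at both `ω₂` and `ω₁` is optimal at every `ω` in between, since there `Q(·; ω)` is a
convex combination of `Q(·; ω₂)` and `Q(·; ω₁)`. Conversely, a partition `C` optimal at an
intermediate `ω` ties with `D` there; the affine function `Q(C; ·) - Q(D; ·)` is then `≤ 0` at
both ends and `0` inside, hence `0`, so `C` is optimal at `ω₁` as well. Such a `D` exists because
`Q` only sees which of the finitely many node-layer pairs share a community.
-/

section AffineFamily

variable {ι : Type*} (a b : ι → ℝ)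

def IsMaxAffine (ω : ℝ) (d : ι) : Prop :=
  ∀ i, a i + ω * b i ≤ a d + ω * b d

variable {a b}

theorem IsMaxAffine.of_le_of_le {x y z : ℝ} {d : ι} (hx : IsMaxAffine a b x d)
    (hy : IsMaxAffine a b y d) (hxz : x ≤ z) (hzy : z ≤ y) : IsMaxAffine a b z d := by
  intro i
  rcases hxz.eq_or_lt with rfl | hxz
  · exact hx i
  have hx' := mul_le_mul_of_nonneg_left (hx i) (sub_nonneg.2 hzy)
  have hy' := mul_le_mul_of_nonneg_left (hy i) (sub_nonneg.2 hxz.le)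
  nlinarith [sub_pos.2 (hxz.trans_le hzy)]

/-- The affine function `ω ↦ (a c + ω * b c) - (a d + ω * b d)` is nonpositive at `x` and `y`
and vanishes at `z ∈ (x, y)`, so it vanishes identically. -/
theorem IsMaxAffine.of_lt_of_lt {x y z : ℝ} {c d : ι} (hx : IsMaxAffine a b x d)
    (hy : IsMaxAffine a b y d) (hz : IsMaxAffine a b z c) (hxz : x < z) (hzy : z < y) :
    IsMaxAffine a b y c := by
  have hdz := hx.of_le_of_le hy hxz.le hzy.le
  have hcd : a c + y * b c = a d + y * b d := by
    nlinarith [hx c, hy c, hz d, hdz c, sub_pos.2 hxz, sub_pos.2 hzy]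
  intro i
  rw [hcd]
  exact hy i

theorem isMaxAffine_iff_of_isMaxAffine_iff {x y z : ℝ} (hne : ∃ d, IsMaxAffine a b y d)
    (hxy : ∀ c, IsMaxAffine a b y c ↔ IsMaxAffine a b x c) (hxz : x < z) (hzy : z < y) (c : ι) :
    IsMaxAffine a b z c ↔ IsMaxAffine a b y c := by
  obtain ⟨d, hdy⟩ := hne
  have hdx := (hxy d).1 hdy
  exact ⟨fun hz => hdx.of_lt_of_lt hdy hz hxz hzy,
    fun hcy => ((hxy c).1 hcy).of_le_of_le hcy hxz.le hzy.le⟩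

end AffineFamily

theorem exists_forall_le_of_factors_through_finite {α κ β : Type*} [Finite κ] [Nonempty α]
    [LinearOrder β] (f : α → β) (g : α → κ) (hfg : ∀ x y, g x = g y → f x = f y) :
    ∃ x, ∀ y, f y ≤ f x := by
  obtain ⟨-, ⟨x, rfl⟩, hmax⟩ :=
    Set.exists_max_image (Set.range g) (f ∘ Function.invFun g) (Set.toFinite _)
      (Set.range_nonempty g)
  refine ⟨Function.invFun g (g x), fun y => ?_⟩
  calc f y = f (Function.invFun g (g y)) := hfg _ _ (Function.invFun_eq ⟨y, rfl⟩).symm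
    _ ≤ f (Function.invFun g (g x)) := hmax _ ⟨y, rfl⟩

theorem persAt_congr {N : ℕ} {c c' : ℕ → Fin N → ℕ} {s : ℕ}
    (h : ∀ i, c s i = c (s + 1) i ↔ c' s i = c' (s + 1) i) : persAt N c s = persAt N c' s := by
  unfold persAt
  congr 1
  exact Finset.filter_congr fun i _ => h i

theorem Q_congr {N T : ℕ} (B : ℕ → Fin N → Fin N → ℝ) (ω : ℝ) {c c' : ℕ → Fin N → ℕ}
    (h : ∀ s s', s < T → s' < T → ∀ i j, c s i = c s' j ↔ c' s i = c' s' j) :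
    Q N T B ω c = Q N T B ω c' := by
  unfold Q pers kdelta
  congr 1
  · refine Finset.sum_congr rfl fun s hs => ?_
    have hs := Finset.mem_range.1 hs
    simp only [h s s hs hs]
  · refine congrArg (fun n : ℕ => 2 * ω * (n : ℝ))
      (Finset.sum_congr rfl fun s hs => persAt_congr fun i => ?_)
    have hs := Finset.mem_range.1 hs
    exact h s (s + 1) (by omega) (by omega) i i

/-- Labels are arbitrary natural numbers, so there are infinitely many partitions; but `Q` only
sees the finitely many patterns of shared communities among the `N T` node-layer pairs. -/
theorem exists_isOptimal (N T : ℕ) (B : ℕ → Fin N → Fin N → ℝ) (ω : ℝ) :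
    ∃ c, IsOptimal N T B ω c :=
  exists_forall_le_of_factors_through_finite (Q N T B ω)
    (fun c (p q : Fin T × Fin N) => c p.1 p.2 = c q.1 q.2)
    fun _ _ hcc' => Q_congr B ω fun s s' hs hs' i j =>
      (congrFun (congrFun hcc' (⟨s, hs⟩, i)) (⟨s', hs'⟩, j)).to_iff

theorem isOptimal_iff_isMaxAffine (N T : ℕ) (B : ℕ → Fin N → Fin N → ℝ) (ω : ℝ)
    (c : ℕ → Fin N → ℕ) :
    IsOptimal N T B ω c ↔
      IsMaxAffine (Q N T B 0) (fun c => 2 * (pers N T c : ℝ)) ω c := by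
  have hQ : ∀ c, Q N T B ω c = Q N T B 0 c + ω * (2 * (pers N T c : ℝ)) := fun c => by
    unfold Q; ring
  simp only [IsOptimal, IsMaxAffine, hQ]

theorem optimal_sets_equal_on_interval_general
    (N T : ℕ)
    (B : ℕ → Fin N → Fin N → ℝ)
    (ω₁ ω₂ : ℝ)
    (heq : ∀ c : ℕ → Fin N → ℕ, IsOptimal N T B ω₁ c ↔ IsOptimal N T B ω₂ c) :
    ∀ ω : ℝ, ω₂ < ω → ω < ω₁ →
      ∀ c : ℕ → Fin N → ℕ, IsOptimal N T B ω c ↔ IsOptimal N T B ω₁ c := by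
  intro ω hω₂ hω₁ c
  obtain ⟨d, hd⟩ := exists_isOptimal N T B ω₁
  simp only [isOptimal_iff_isMaxAffine] at heq hd ⊢
  exact isMaxAffine_iff_of_isMaxAffine_iff ⟨d, hd⟩ heq hω₂ hω₁ c

/-- **Corollary 3.** If the sets of globally optimal multilayer partitions at couplings
`ω₁ > ω₂ > 0` coincide, then for every intermediate coupling `ω ∈ (ω₂, ω₁)` the set of
globally optimal partitions equals this same set. -/
theorem optimal_sets_equal_on_interval
    (N T : ℕ)
    (B : ℕ → Fin N → Fin N → ℝ)
    (ω₁ ω₂ : ℝ) (h21 : ω₂ < ω₁) (h2 : 0 < ω₂)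
    (heq : ∀ c : ℕ → Fin N → ℕ, IsOptimal N T B ω₁ c ↔ IsOptimal N T B ω₂ c) :
    ∀ ω : ℝ, ω₂ < ω → ω < ω₁ →
      ∀ c : ℕ → Fin N → ℕ, IsOptimal N T B ω c ↔ IsOptimal N T B ω₁ c :=
  optimal_sets_equal_on_interval_general N T B ω₁ ω₂ heq
end

section
/- With A the Pearson correlation matrix of standardized time series ẑ_1,...,ẑ_N and ẑ_tot their sum, if the partial correlation of ẑ_i and ẑ_j given ẑ_tot is zero, then corr(ẑ_i, ẑ_j) = k_i k_j/(2m); i.e., the correlation equals the Newman–Girvan null-network entry. -/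
open Finset

variable {τ : Type*} [Fintype τ]

/-- Mean of a finite time series. -/
noncomputable def tmean (x : τ → ℝ) : ℝ := (∑ t, x t) / (Fintype.card τ : ℝ)

/-- Covariance of two finite time series. -/
noncomputable def tcov (x y : τ → ℝ) : ℝ :=
  (∑ t, (x t - tmean x) * (y t - tmean y)) / (Fintype.card τ : ℝ)

/-- Standard deviation of a finite time series. -/
noncomputable def tsdev (x : τ → ℝ) : ℝ := Real.sqrt (tcov x x)

/-- Pearson correlation of two finite time series. -/
noncomputable def tcorr (x y : τ → ℝ) : ℝ := tcov x y / (tsdev x * tsdev y)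


lemma tcov_nonneg {τ : Type*} [Fintype τ] (x : τ → ℝ) : 0 ≤ tcov x x := by
  unfold tcov
  apply div_nonneg
  · exact Finset.sum_nonneg fun t _ => mul_self_nonneg _
  · positivity

lemma tmean_sum {τ : Type*} [Fintype τ] {N : ℕ} (z : Fin N → τ → ℝ) (h : ∀ i, tmean (z i) = 0) :
    tmean (fun t => ∑ l : Fin N, z l t) = 0 := by
  unfold tmean at *
  rw [Finset.sum_comm, Finset.sum_div]
  simp [h]

lemma tcov_eq {τ : Type*} [Fintype τ] (x y : τ → ℝ) (hx : tmean x = 0) (hy : tmean y = 0) :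
    tcov x y = (∑ t, x t * y t) / (Fintype.card τ : ℝ) := by
  unfold tcov
  simp [hx, hy]

lemma tcov_comm {τ : Type*} [Fintype τ] (x y : τ → ℝ) : tcov x y = tcov y x := by
  unfold tcov
  congr 1
  exact Finset.sum_congr rfl fun t _ => mul_comm _ _

lemma tcov_sum_right {τ : Type*} [Fintype τ] {N : ℕ} (z : Fin N → τ → ℝ)
    (h : ∀ i, tmean (z i) = 0) (x : τ → ℝ) (hx : tmean x = 0) :
    tcov x (fun t => ∑ l : Fin N, z l t) = ∑ l : Fin N, tcov x (z l) := by
  rw [tcov_eq x _ hx (tmean_sum z h)]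
  have : ∀ l, tcov x (z l) = (∑ t, x t * z l t) / (Fintype.card τ : ℝ) :=
    fun l => tcov_eq x (z l) hx (h l)
  simp only [this]
  rw [← Finset.sum_div]
  congr 1
  rw [Finset.sum_comm]
  simp [Finset.mul_sum]

/-- With `A` the Pearson correlation matrix of standardized time series `ẑ_1,…,ẑ_N` and
`ẑ_tot` their sum: if the partial correlation of `ẑ_i` and `ẑ_j` given `ẑ_tot` is zero,
then `corr(ẑ_i, ẑ_j) = k_i k_j / (2m)`, i.e., the correlation equals the Newman–Girvan
null-network entry. -/
theorem partial_corr_zero_implies_ng_entry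
    (N : ℕ) (τ : Type*) [Fintype τ] [Nonempty τ]
    (z : Fin N → τ → ℝ)
    (hmean : ∀ i, tmean (z i) = 0)
    (hvar : ∀ i, tcov (z i) (z i) = 1)
    (hσ : 0 < tsdev (fun t => ∑ l : Fin N, z l t))
    (i j : Fin N)
    (hi : |tcorr (z i) (fun t => ∑ l : Fin N, z l t)| < 1)
    (hj : |tcorr (z j) (fun t => ∑ l : Fin N, z l t)| < 1)
    (hpartial :
      (tcorr (z i) (z j) -
          tcorr (z i) (fun t => ∑ l : Fin N, z l t) *
            tcorr (z j) (fun t => ∑ l : Fin N, z l t)) /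
        (Real.sqrt (1 - (tcorr (z i) (fun t => ∑ l : Fin N, z l t))^2) *
          Real.sqrt (1 - (tcorr (z j) (fun t => ∑ l : Fin N, z l t))^2)) = 0) :
    tcorr (z i) (z j) =
      (∑ l : Fin N, tcorr (z i) (z l)) * (∑ l : Fin N, tcorr (z j) (z l)) /
        (∑ i' : Fin N, ∑ j' : Fin N, tcorr (z i') (z j')) := by
  set zt : τ → ℝ := fun t => ∑ l : Fin N, z l t with hzt
  set σ : ℝ := tsdev zt with hσdef
  have hσne : σ ≠ 0 := ne_of_gt hσ
  have hsd : ∀ l, tsdev (z l) = 1 := by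
    intro l; unfold tsdev; rw [hvar l]; exact Real.sqrt_one
  have hcorr_cov : ∀ a b : Fin N, tcorr (z a) (z b) = tcov (z a) (z b) := by
    intro a b; unfold tcorr; rw [hsd a, hsd b]; simp
  have hk : ∀ a : Fin N, tcov (z a) zt = ∑ l : Fin N, tcov (z a) (z l) := by
    intro a; exact tcov_sum_right z hmean (z a) (hmean a)
  have hmt : tmean zt = 0 := tmean_sum z hmean
  have h2m : tcov zt zt = ∑ i' : Fin N, ∑ j' : Fin N, tcov (z i') (z j') := by
    rw [tcov_sum_right z hmean zt hmt]
    exact Finset.sum_congr rfl fun l _ => by rw [tcov_comm]; exact hk l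
  have hσsq : σ ^ 2 = tcov zt zt := by
    rw [hσdef]; unfold tsdev; rw [Real.sq_sqrt (tcov_nonneg zt)]
  have hri : tcorr (z i) zt = tcov (z i) zt / σ := by
    unfold tcorr; rw [hsd i, one_mul]
  have hrj : tcorr (z j) zt = tcov (z j) zt / σ := by
    unfold tcorr; rw [hsd j, one_mul]
  -- denominator of partial correlation is nonzero
  have h1i : 0 < 1 - (tcorr (z i) zt) ^ 2 := by
    have := abs_lt.mp hi; nlinarith [this.1, this.2]
  have h1j : 0 < 1 - (tcorr (z j) zt) ^ 2 := by
    have := abs_lt.mp hj; nlinarith [this.1, this.2]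
  have hden : Real.sqrt (1 - (tcorr (z i) zt) ^ 2) *
      Real.sqrt (1 - (tcorr (z j) zt) ^ 2) ≠ 0 :=
    ne_of_gt (mul_pos (Real.sqrt_pos.mpr h1i) (Real.sqrt_pos.mpr h1j))
  have hnum : tcorr (z i) (z j) = tcorr (z i) zt * tcorr (z j) zt := by
    have := (div_eq_zero_iff.mp hpartial).resolve_right hden
    linarith
  have hσsq_ne : tcov zt zt ≠ 0 := by rw [← hσsq]; positivity
  calc tcorr (z i) (z j) = tcorr (z i) zt * tcorr (z j) zt := hnum
    _ = (tcov (z i) zt * tcov (z j) zt) / σ ^ 2 := by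
        rw [hri, hrj, div_mul_div_comm, ← sq]
    _ = (∑ l : Fin N, tcorr (z i) (z l)) * (∑ l : Fin N, tcorr (z j) (z l)) /
        (∑ i' : Fin N, ∑ j' : Fin N, tcorr (z i') (z j')) := by
        simp only [hcorr_cov, hσsq, ← hk, h2m]
end
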